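/- Assume T''(x₀) = 0 and T'''(x₀) = 0. Then there exist δ₀ > 0 and K₁ > 0 such that for every δ ∈ (0, δ₀] and all x, y, z in the disk {|w − x₀| < δ} with x ≠ y and z ≠ y, one has |g(x,y) − g(z,y)| ≤ K₁·|x − z|·δ. -/

import Mathlib

open Complex

/-- The complex conjugate `g(x,y)` of the `x`-gradient of the regular part of the Green's
function: `g(x,y) = (1/(2π))·(T'(x)/(T(x)−T(y)) − conj(T(y))·T'(x)/(conj(T(y))·T(x)−1)
− 1/(x−y))`. -/
noncomputable def gfun (T : ℂ → ℂ) (x y : ℂ) : ℂ :=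
  (2 * (Real.pi : ℂ))⁻¹ *
    (deriv T x / (T x - T y)
      - (starRingEnd ℂ) (T y) * deriv T x / ((starRingEnd ℂ) (T y) * T x - 1)
      - 1 / (x - y))

open Metric Set Filter Topology ComplexConjugate

/-!
Write `2π g(x,y) = F(x) - B(x)` with `F(w) = T'(w)/(T(w) - T(y)) - 1/(w - y)` and
`B(w) = c T'(w)/(c T(w) - 1)`, `c = conj (T y)`.

An injective holomorphic map has `T'(x₀) ≠ 0`: otherwise `T - T(x₀)` is locally the `n`-th power,
`n ≥ 2`, of a local coordinate `ψ`, and points where `ψ` takes the values `w` and `ω w`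
(`ω` a primitive `n`-th root of unity) have the same image. So `T'` stays close to `T'(x₀)` near
`x₀`, and `T(w) - T(y)` is comparable to `w - y`. Since `T''` and `T'''` vanish at `x₀`,
`|T''| = O(δ²)` on the disk of radius `3δ`; there the removable singularity `F` is bounded by
`O(sup |T''| / |T'(x₀)|) = O(δ²)`, and the Cauchy estimate makes `F` `O(δ)`-Lipschitz on the disk
of radius `δ`. The reflected term `B` carries the factor `c`, which is `O(δ)` because
`T(x₀) = 0`, so it is `O(δ)`-Lipschitz too.
-/

theorem AnalyticAt.exists_analyticAt_pow_eq {h : ℂ → ℂ} {x₀ : ℂ} (hh : AnalyticAt ℂ h x₀)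
    (hx₀ : h x₀ ≠ 0) {n : ℕ} (hn : n ≠ 0) :
    ∃ φ : ℂ → ℂ, AnalyticAt ℂ φ x₀ ∧ φ x₀ ≠ 0 ∧ ∀ z, φ z ^ n = h z := by
  refine ⟨fun z => h x₀ ^ (n⁻¹ : ℂ) * (h z / h x₀) ^ (n⁻¹ : ℂ), ?_, by simp [hx₀], fun z => ?_⟩
  · exact analyticAt_const.mul
      ((hh.div analyticAt_const hx₀).cpow analyticAt_const (by simp [div_self hx₀]))
  · rw [mul_pow, cpow_nat_inv_pow _ hn, cpow_nat_inv_pow _ hn, mul_div_cancel₀ _ hx₀]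

theorem HasStrictDerivAt.not_injOn_pow {ψ : ℂ → ℂ} {c x₀ : ℂ} (hψ : HasStrictDerivAt ψ c x₀)
    (hc : c ≠ 0) (hψx₀ : ψ x₀ = 0) {n : ℕ} (hn : 2 ≤ n) {U : Set ℂ} (hU : U ∈ 𝓝 x₀) :
    ¬ InjOn (fun z => ψ z ^ n) U := by
  intro hinj
  obtain ⟨ω, hω⟩ : ∃ ω : ℂ, IsPrimitiveRoot ω n := ⟨_, isPrimitiveRoot_exp n (by omega)⟩
  have hV : ∀ᶠ w in 𝓝 0, w ∈ ψ '' U := by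
    rw [← hψx₀, ← hψ.map_nhds_eq hc]
    exact image_mem_map hU
  have hωV : ∀ᶠ w in 𝓝 0, ω * w ∈ ψ '' U :=
    (continuous_const_mul ω).continuousAt.preimage_mem_nhds (by rwa [mul_zero])
  obtain ⟨w, ⟨⟨z₁, hz₁, hψz₁⟩, ⟨z₂, hz₂, hψz₂⟩⟩, hw⟩ :=
    ((hV.and hωV).filter_mono nhdsWithin_le_nhds |>.and
      (self_mem_nhdsWithin : {0}ᶜ ∈ 𝓝[≠] (0 : ℂ))).exists
  have hz : z₁ = z₂ :=
    hinj hz₁ hz₂ (by simp only [hψz₁, hψz₂, mul_pow, hω.pow_eq_one, one_mul])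
  refine hω.ne_one (by omega) (mul_right_cancel₀ (show w ≠ 0 from hw) ?_)
  rw [one_mul, ← hψz₂, ← hz, hψz₁]

theorem deriv_ne_zero_of_injOn {f : ℂ → ℂ} {s : Set ℂ} (hs : IsOpen s)
    (hf : DifferentiableOn ℂ f s) (hinj : InjOn f s) {x₀ : ℂ} (hx₀ : x₀ ∈ s) :
    deriv f x₀ ≠ 0 := by
  intro hderiv
  have hsx₀ : ∀ᶠ z in 𝓝 x₀, z ∈ s := hs.mem_nhds hx₀
  have hfa : AnalyticAt ℂ f x₀ := hf.analyticAt hsx₀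
  have hnonconst : analyticOrderAt (f · - f x₀) x₀ ≠ ⊤ := by
    rw [Ne, analyticOrderAt_eq_top]
    intro hconst
    obtain ⟨z, ⟨hzs, hz⟩, hzx₀⟩ :=
      ((hsx₀.and hconst).filter_mono nhdsWithin_le_nhds |>.and
        (self_mem_nhdsWithin : {x₀}ᶜ ∈ 𝓝[≠] x₀)).exists
    exact hzx₀ (hinj hzs hx₀ (sub_eq_zero.mp hz))
  rw [← hfa.analyticOrderAt_deriv_add_one] at hnonconst
  obtain ⟨m, hm⟩ := ENat.ne_top_iff_exists.mp (WithTop.add_ne_top.mp hnonconst).1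
  have hm0 : m ≠ 0 := by
    rintro rfl
    exact analyticOrderAt_ne_zero.mpr ⟨hfa.deriv, hderiv⟩ hm.symm
  obtain ⟨h, hha, hhx₀, hfh⟩ := (hfa.sub analyticAt_const).analyticOrderAt_eq_natCast.mp
    (by rw [← hfa.analyticOrderAt_deriv_add_one, ← hm]; rfl :
      analyticOrderAt (f · - f x₀) x₀ = ((m + 1 : ℕ) : ℕ∞))
  obtain ⟨φ, hφa, hφx₀, hφh⟩ := hha.exists_analyticAt_pow_eq hhx₀ (Nat.succ_ne_zero m)
  set ψ : ℂ → ℂ := fun z => (z - x₀) * φ z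
  have hψ : HasStrictDerivAt ψ (φ x₀) x₀ := by
    have hψ' : HasDerivAt ψ (φ x₀) x₀ := by
      simpa [ψ] using ((hasDerivAt_id' x₀).sub_const x₀).fun_mul hφa.differentiableAt.hasDerivAt
    have hψa : AnalyticAt ℂ ψ x₀ := by fun_prop
    exact hψ'.deriv ▸ hψa.hasStrictDerivAt
  refine hψ.not_injOn_pow hφx₀ (by simp [ψ]) (by omega : 2 ≤ m + 1) (hsx₀.and hfh)
    fun z₁ hz₁ z₂ hz₂ h12 => hinj hz₁.1 hz₂.1 ?_
  have e₁ := hz₁.2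
  have e₂ := hz₂.2
  simp only [Pi.sub_apply, smul_eq_mul, ← hφh, ← mul_pow] at e₁ e₂
  simp only [ψ] at h12
  linear_combination e₁ - e₂ + h12

theorem ContinuousAt.exists_closedBall_subset_norm_sub_le {E : Type*} [SeminormedAddCommGroup E]
    {g : ℂ → E} {x₀ : ℂ} (hg : ContinuousAt g x₀) {Ω : Set ℂ} (hΩ : Ω ∈ 𝓝 x₀) {ε : ℝ}
    (hε : 0 < ε) : ∃ ρ > 0, closedBall x₀ ρ ⊆ Ω ∩ {w | ‖g w - g x₀‖ ≤ ε} := by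
  refine nhds_basis_closedBall.mem_iff.mp (inter_mem hΩ ?_)
  have hcont : ContinuousAt (fun w => ‖g w - g x₀‖) x₀ := (hg.sub continuousAt_const).norm
  exact hcont.preimage_mem_nhds (Iic_mem_nhds (by simpa using hε))

section Estimates

variable {E : Type*} [NormedAddCommGroup E] [NormedSpace ℂ E]

theorem norm_le_mul_radius_of_apply_center_eq_zero {f : ℂ → E} {c : ℂ} {r M : ℝ}
    (hf : DifferentiableOn ℂ f (ball c r)) (hfc : f c = 0)
    (hM : ∀ w ∈ ball c r, ‖deriv f w‖ ≤ M) {w : ℂ} (hw : w ∈ ball c r) : ‖f w‖ ≤ M * r := by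
  have hc : c ∈ ball c r := mem_ball_self (pos_of_mem_ball hw)
  have hmvt := (convex_ball c r).norm_image_sub_le_of_norm_deriv_le
    (fun u hu => hf.differentiableAt (isOpen_ball.mem_nhds hu)) hM hc hw
  rw [hfc, sub_zero] at hmvt
  refine hmvt.trans (mul_le_mul_of_nonneg_left ?_ ((norm_nonneg _).trans (hM c hc)))
  exact (mem_ball_iff_norm.mp hw).le

theorem norm_sub_le_of_forall_norm_le_on_ball_three_mul {f : ℂ → E} {c : ℂ} {r K : ℝ}
    (hr : 0 < r) (hf : DifferentiableOn ℂ f (ball c (3 * r)))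
    (hK : ∀ w ∈ ball c (3 * r), ‖f w‖ ≤ K) {x z : ℂ} (hx : x ∈ ball c r) (hz : z ∈ ball c r) :
    ‖f x - f z‖ ≤ K / r * ‖x - z‖ := by
  have hsub : ball c r ⊆ ball c (3 * r) := ball_subset_ball (by linarith)
  have hderiv : ∀ w ∈ ball c r, ‖deriv f w‖ ≤ K / r := by
    intro w hw
    have hball : ball w (2 * r) ⊆ ball c (3 * r) := by
      refine ball_subset_ball' ?_
      linarith [mem_ball.mp hw]
    have hmaps : MapsTo f (ball w (2 * r)) (closedBall (f w) (2 * K)) := fun u hu => by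
      rw [mem_closedBall, dist_eq_norm]
      linarith [norm_sub_le (f u) (f w), hK u (hball hu), hK w (hsub hw)]
    have := norm_deriv_le_div_of_mapsTo_ball (hf.mono hball) hmaps (by positivity)
    rwa [mul_div_mul_left _ _ two_ne_zero] at this
  exact (convex_ball c r).norm_image_sub_le_of_norm_deriv_le
    (fun u hu => hf.differentiableAt (isOpen_ball.mem_nhds (hsub hu))) hderiv hz hx

end Estimates

namespace Convex

variable {f : ℂ → ℂ} {s : Set ℂ}

theorem norm_sub_sub_deriv_mul_le (hs : Convex ℝ s) (hso : IsOpen s)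
    (hf : DifferentiableOn ℂ f s) {M : ℝ} (hM : ∀ w ∈ s, ‖deriv (deriv f) w‖ ≤ M)
    {x y : ℂ} (hx : x ∈ s) (hy : y ∈ s) :
    ‖f y - f x - deriv f x * (y - x)‖ ≤ M * ‖y - x‖ ^ 2 := by
  have hf' : DifferentiableOn ℂ (deriv f) s := hf.deriv hso
  set t := s ∩ closedBall x ‖y - x‖
  have hts : t ⊆ s := inter_subset_left
  have hbound : ∀ w ∈ t, ‖deriv (fun u => f u - deriv f x * u) w‖ ≤ M * ‖y - x‖ := by
    intro w hw
    have hdiff : deriv (fun u => f u - deriv f x * u) w = deriv f w - deriv f x := by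
      have := (hf.differentiableAt (hso.mem_nhds hw.1)).hasDerivAt.fun_sub
        ((hasDerivAt_id' w).const_mul (deriv f x))
      simpa using this.deriv
    rw [hdiff]
    refine (hs.norm_image_sub_le_of_norm_deriv_le
      (fun u hu => hf'.differentiableAt (hso.mem_nhds hu)) hM hx hw.1).trans ?_
    exact mul_le_mul_of_nonneg_left (mem_closedBall_iff_norm.mp hw.2)
      ((norm_nonneg _).trans (hM x hx))
  have := (hs.inter (convex_closedBall x _)).norm_image_sub_le_of_norm_deriv_le
    (fun u hu => ((hf.differentiableAt (hso.mem_nhds (hts hu))).sub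
      ((differentiableAt_id).const_mul _))) hbound
    ⟨hx, mem_closedBall_self (norm_nonneg _)⟩ ⟨hy, mem_closedBall.mpr (dist_eq_norm y x).le⟩
  calc ‖f y - f x - deriv f x * (y - x)‖
      = ‖(f y - deriv f x * y) - (f x - deriv f x * x)‖ := by ring_nf
    _ ≤ M * ‖y - x‖ * ‖y - x‖ := this
    _ = M * ‖y - x‖ ^ 2 := by ring

theorem norm_dslope_sub_le (hs : Convex ℝ s) (hso : IsOpen s) (hf : DifferentiableOn ℂ f s)
    {b : ℂ} {C : ℝ} (hC : ∀ w ∈ s, ‖deriv f w - b‖ ≤ C) {y w : ℂ} (hy : y ∈ s) (hw : w ∈ s) :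
    ‖dslope f y w - b‖ ≤ C := by
  rcases eq_or_ne w y with rfl | hwy
  · rw [dslope_same]
    exact hC w hw
  have hwy' : w - y ≠ 0 := sub_ne_zero.mpr hwy
  have hderiv : ∀ u ∈ s, ‖deriv (fun v => f v - b * v) u‖ ≤ C := by
    intro u hu
    have := (hf.differentiableAt (hso.mem_nhds hu)).hasDerivAt.fun_sub
      ((hasDerivAt_id' u).const_mul b)
    simpa [this.deriv] using hC u hu
  have hmvt := hs.norm_image_sub_le_of_norm_deriv_le
    (fun u hu => (hf.differentiableAt (hso.mem_nhds hu)).sub (differentiableAt_id.const_mul b))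
    hderiv hy hw
  rw [dslope_of_ne _ hwy, slope_def_field,
    show (f w - f y) / (w - y) - b = ((f w - b * w) - (f y - b * y)) / (w - y) by
      field_simp; ring,
    norm_div, div_le_iff₀ (norm_pos_iff.mpr hwy')]
  exact hmvt

theorem norm_dslope_deriv_sub_dslope_le (hs : Convex ℝ s) (hso : IsOpen s)
    (hf : DifferentiableOn ℂ f s) {M : ℝ} (hM : ∀ w ∈ s, ‖deriv (deriv f) w‖ ≤ M) {y w : ℂ}
    (hy : y ∈ s) (hw : w ∈ s) :
    ‖dslope (fun u => deriv f u - dslope f y u) y w‖ ≤ M := by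
  have hys : s ∈ 𝓝 y := hso.mem_nhds hy
  have hoff : ∀ u ∈ s, u ≠ y → ‖dslope (fun u => deriv f u - dslope f y u) y u‖ ≤ M := by
    intro u hu huy
    have huy' : u - y ≠ 0 := sub_ne_zero.mpr huy
    rw [dslope_of_ne _ huy, slope_def_field, dslope_same, dslope_of_ne _ huy, slope_def_field,
      sub_self, sub_zero,
      show (deriv f u - (f u - f y) / (u - y)) / (u - y)
        = (f y - f u - deriv f u * (y - u)) / (y - u) ^ 2 by field_simp; ring,
      norm_div, norm_pow, div_le_iff₀ (pow_pos (norm_pos_iff.mpr (sub_ne_zero.mpr huy.symm)) 2)]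
    exact hs.norm_sub_sub_deriv_mul_le hso hf hM hu hy
  rcases eq_or_ne w y with rfl | hwy
  · -- at the removable singularity the bound follows by continuity
    have hcont : ContinuousAt (dslope (fun u => deriv f u - dslope f w u) w) w :=
      (((differentiableOn_dslope hys).mpr
        ((hf.deriv hso).sub ((differentiableOn_dslope hys).mpr hf))).differentiableAt
          hys).continuousAt
    refine le_of_tendsto (hcont.tendsto.mono_left (nhdsWithin_le_nhds (s := {w}ᶜ))).norm ?_
    filter_upwards [self_mem_nhdsWithin, mem_nhdsWithin_of_mem_nhds hys] with u huy hu
    exact hoff u hu huy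
  · exact hoff w hw hwy

theorem norm_mul_deriv_div_sub_one_sub_le (hs : Convex ℝ s) (hso : IsOpen s)
    (hf : DifferentiableOn ℂ f s) {c : ℂ} {L M : ℝ}
    (hcf : ∀ w ∈ s, ‖c * f w‖ ≤ 1 / 2) (hL : ∀ w ∈ s, ‖deriv f w‖ ≤ L)
    (hM : ∀ w ∈ s, ‖deriv (deriv f) w‖ ≤ M) {x z : ℂ} (hx : x ∈ s) (hz : z ∈ s) :
    ‖c * deriv f x / (c * f x - 1) - c * deriv f z / (c * f z - 1)‖
      ≤ ‖c‖ * (2 * M + 4 * ‖c‖ * L ^ 2) * ‖x - z‖ := by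
  have hD : ∀ w ∈ s, 1 / 2 ≤ ‖c * f w - 1‖ := fun w hw => by
    have := norm_sub_norm_le (1 : ℂ) (c * f w)
    rw [norm_one, norm_sub_rev] at this
    linarith [hcf w hw]
  have hD0 : ∀ w ∈ s, c * f w - 1 ≠ 0 := fun w hw h => by
    have := hD w hw
    rw [h, norm_zero] at this
    norm_num at this
  have hderiv : ∀ w ∈ s, HasDerivAt (fun u => c * deriv f u / (c * f u - 1))
      (c * deriv (deriv f) w / (c * f w - 1) - (c * deriv f w) ^ 2 / (c * f w - 1) ^ 2) w := by
    intro w hw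
    have hf1 := (hf.differentiableAt (hso.mem_nhds hw)).hasDerivAt
    have hf2 := ((hf.deriv hso).differentiableAt (hso.mem_nhds hw)).hasDerivAt
    refine ((hf2.const_mul c).fun_div ((hf1.const_mul c).sub_const 1) (hD0 w hw)).congr_deriv ?_
    field_simp [hD0 w hw]
  have hbound : ∀ w ∈ s, ‖c * deriv (deriv f) w / (c * f w - 1)
      - (c * deriv f w) ^ 2 / (c * f w - 1) ^ 2‖ ≤ ‖c‖ * (2 * M + 4 * ‖c‖ * L ^ 2) := by
    intro w hw
    have hDw := hD w hw
    have hL0 : 0 ≤ L := (norm_nonneg _).trans (hL w hw)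
    have h1 : ‖c * deriv (deriv f) w / (c * f w - 1)‖ ≤ ‖c‖ * M / (1 / 2) := by
      rw [norm_div, norm_mul]
      gcongr
      · exact mul_nonneg (norm_nonneg _) ((norm_nonneg _).trans (hM w hw))
      · exact hM w hw
    have h2 : ‖(c * deriv f w) ^ 2 / (c * f w - 1) ^ 2‖ ≤ (‖c‖ * L) ^ 2 / (1 / 2) ^ 2 := by
      rw [norm_div, norm_pow, norm_pow, norm_mul]
      gcongr
      exact hL w hw
    calc _ ≤ _ := norm_sub_le _ _
      _ ≤ ‖c‖ * M / (1 / 2) + (‖c‖ * L) ^ 2 / (1 / 2) ^ 2 := add_le_add h1 h2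
      _ = ‖c‖ * (2 * M + 4 * ‖c‖ * L ^ 2) := by ring
  exact hs.norm_image_sub_le_of_norm_hasDerivWithin_le
    (fun w hw => (hderiv w hw).hasDerivWithinAt) hbound hz hx

end Convex

theorem Convex.exists_differentiableOn_eq_deriv_div_sub_sub_inv {T : ℂ → ℂ} {s : Set ℂ}
    (hs : Convex ℝ s) (hso : IsOpen s) (hT : DifferentiableOn ℂ T s) {b : ℂ} (hb : b ≠ 0)
    (hTb : ∀ w ∈ s, ‖deriv T w - b‖ ≤ ‖b‖ / 2) {M : ℝ}
    (hM : ∀ w ∈ s, ‖deriv (deriv T) w‖ ≤ M) {y : ℂ} (hy : y ∈ s) :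
    ∃ F : ℂ → ℂ, DifferentiableOn ℂ F s ∧ (∀ w ∈ s, ‖F w‖ ≤ 2 * M / ‖b‖) ∧
      ∀ w ∈ s, w ≠ y → F w = deriv T w / (T w - T y) - 1 / (w - y) := by
  have hys : s ∈ 𝓝 y := hso.mem_nhds hy
  set Q := dslope T y
  set N := dslope (fun u => deriv T u - Q u) y
  have hQ : ∀ w ∈ s, ‖b‖ / 2 ≤ ‖Q w‖ := fun w hw => by
    have := hs.norm_dslope_sub_le hso hT hTb hy hw
    linarith [norm_sub_norm_le b (Q w), norm_sub_rev b (Q w)]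
  have hQ0 : ∀ w ∈ s, Q w ≠ 0 := fun w hw h => by
    have := hQ w hw
    rw [h, norm_zero] at this
    linarith [norm_pos_iff.mpr hb]
  have hQd : DifferentiableOn ℂ Q s := (differentiableOn_dslope hys).mpr hT
  refine ⟨fun w => N w / Q w,
    ((differentiableOn_dslope hys).mpr ((hT.deriv hso).sub hQd)).div hQd hQ0, fun w hw => ?_,
    fun w hw hwy => ?_⟩
  · have hN := hs.norm_dslope_deriv_sub_dslope_le hso hT hM hy hw
    rw [norm_div, show 2 * M / ‖b‖ = M / (‖b‖ / 2) by field_simp]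
    exact div_le_div₀ ((norm_nonneg _).trans hN) hN (by positivity) (hQ w hw)
  · have hQw : Q w = (T w - T y) / (w - y) := by
      change dslope T y w = _
      rw [dslope_of_ne _ hwy, slope_def_field]
    have hNw : N w = (deriv T w - Q w) / (w - y) := by
      change dslope (fun u => deriv T u - Q u) y w = _
      rw [dslope_of_ne _ hwy, slope_def_field]
      change (deriv T w - Q w - (deriv T y - dslope T y y)) / (w - y) = _
      rw [dslope_same, sub_self, sub_zero]
    have hTw : T w - T y ≠ 0 := fun h => hQ0 w hw (by rw [hQw, h, zero_div])
    have hwy' : w - y ≠ 0 := sub_ne_zero.mpr hwy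
    simp only [hNw, hQw]
    field_simp

theorem norm_deriv_deriv_le_of_iteratedDeriv_eq_zero {T : ℂ → ℂ} {x₀ : ℂ} {r M : ℝ}
    (hT : DifferentiableOn ℂ T (ball x₀ r)) (hT2 : iteratedDeriv 2 T x₀ = 0)
    (hT3 : iteratedDeriv 3 T x₀ = 0) (hM : ∀ w ∈ ball x₀ r, ‖iteratedDeriv 4 T w‖ ≤ M)
    {w : ℂ} (hw : w ∈ ball x₀ r) : ‖deriv (deriv T) w‖ ≤ M * r ^ 2 := by
  have hA := hT.analyticOnNhd isOpen_ball
  have hd : ∀ k, DifferentiableOn ℂ (iteratedDeriv k T) (ball x₀ r) := fun k => by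
    rw [iteratedDeriv_eq_iterate]
    exact (hA.iterated_deriv k).differentiableOn
  have h3 : ∀ u ∈ ball x₀ r, ‖iteratedDeriv 3 T u‖ ≤ M * r := fun u hu =>
    norm_le_mul_radius_of_apply_center_eq_zero (hd 3) hT3
      (fun v hv => by simpa only [iteratedDeriv_succ] using hM v hv) hu
  have h2 := norm_le_mul_radius_of_apply_center_eq_zero (hd 2) hT2
    (fun v hv => by simpa only [iteratedDeriv_succ] using h3 v hv) hw
  simpa only [iteratedDeriv_succ, iteratedDeriv_zero, pow_two, mul_assoc] using h2

theorem norm_conj_mul_deriv_div_sub_one_sub_le {T : ℂ → ℂ} {x₀ : ℂ} {δ L M : ℝ}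
    (hT : DifferentiableOn ℂ T (ball x₀ δ)) (hT0 : T x₀ = 0)
    (hL : ∀ w ∈ ball x₀ δ, ‖deriv T w‖ ≤ L) (hLδ : 2 * L * δ ≤ 1)
    (hM : ∀ w ∈ ball x₀ δ, ‖deriv (deriv T) w‖ ≤ M) {x y z : ℂ}
    (hx : x ∈ ball x₀ δ) (hy : y ∈ ball x₀ δ) (hz : z ∈ ball x₀ δ) :
    ‖conj (T y) * deriv T x / (conj (T y) * T x - 1)
        - conj (T y) * deriv T z / (conj (T y) * T z - 1)‖
      ≤ L * (2 * M + 2 * L ^ 2) * ‖x - z‖ * δ := by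
  have hTw : ∀ w ∈ ball x₀ δ, ‖T w‖ ≤ L * δ :=
    fun w hw => norm_le_mul_radius_of_apply_center_eq_zero hT hT0 hL hw
  have hc : ‖conj (T y)‖ ≤ L * δ := by
    rw [RCLike.norm_conj]
    exact hTw y hy
  have hcT : ∀ w ∈ ball x₀ δ, ‖conj (T y) * T w‖ ≤ 1 / 2 := fun w hw => by
    rw [norm_mul]
    nlinarith [hTw w hw, norm_nonneg (conj (T y)), norm_nonneg (T w)]
  have hδ : 0 < δ := pos_of_mem_ball hx
  have hL0 : 0 ≤ L := (norm_nonneg _).trans (hL y hy)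
  have hM0 : 0 ≤ M := (norm_nonneg _).trans (hM y hy)
  refine ((convex_ball x₀ δ).norm_mul_deriv_div_sub_one_sub_le isOpen_ball hT hcT hL hM
    hx hz).trans ?_
  calc ‖conj (T y)‖ * (2 * M + 4 * ‖conj (T y)‖ * L ^ 2) * ‖x - z‖
      ≤ L * δ * (2 * M + 4 * (L * δ) * L ^ 2) * ‖x - z‖ := by gcongr
    _ ≤ L * δ * (2 * M + 2 * L ^ 2) * ‖x - z‖ := by
      gcongr
      nlinarith [mul_le_mul_of_nonneg_right hLδ (sq_nonneg L)]
    _ = _ := by ring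

theorem norm_gfun_sub_gfun_le {T : ℂ → ℂ} {x₀ b : ℂ} {δ M : ℝ} (hδ : 0 < δ) (hδ1 : δ ≤ 1)
    (hb : b ≠ 0) (hbδ : 4 * ‖b‖ * δ ≤ 1) (hT : DifferentiableOn ℂ T (ball x₀ (3 * δ)))
    (hT0 : T x₀ = 0) (hTb : ∀ w ∈ ball x₀ (3 * δ), ‖deriv T w - b‖ ≤ ‖b‖ / 2)
    (hT2 : iteratedDeriv 2 T x₀ = 0) (hT3 : iteratedDeriv 3 T x₀ = 0)
    (hM : ∀ w ∈ ball x₀ (3 * δ), ‖iteratedDeriv 4 T w‖ ≤ M)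
    {x y z : ℂ} (hx : x ∈ ball x₀ δ) (hy : y ∈ ball x₀ δ) (hz : z ∈ ball x₀ δ)
    (hxy : x ≠ y) (hzy : z ≠ y) :
    ‖gfun T x y - gfun T z y‖ ≤
      (18 * M / ‖b‖ + 2 * ‖b‖ * (18 * M + 8 * ‖b‖ ^ 2)) * ‖x - z‖ * δ := by
  have hsub : ball x₀ δ ⊆ ball x₀ (3 * δ) := ball_subset_ball (by linarith)
  have hT'' : ∀ w ∈ ball x₀ (3 * δ), ‖deriv (deriv T) w‖ ≤ 9 * M * δ ^ 2 := fun w hw => by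
    linarith [norm_deriv_deriv_le_of_iteratedDeriv_eq_zero hT hT2 hT3 hM hw]
  obtain ⟨F, hFd, hFb, hFeq⟩ :=
    (convex_ball x₀ (3 * δ)).exists_differentiableOn_eq_deriv_div_sub_sub_inv
      isOpen_ball hT hb hTb hT'' (hsub hy)
  have hF : ‖F x - F z‖ ≤ 18 * M / ‖b‖ * ‖x - z‖ * δ := by
    convert norm_sub_le_of_forall_norm_le_on_ball_three_mul hδ hFd hFb hx hz using 1
    field_simp
    ring
  have hM0 : 0 ≤ M := (norm_nonneg _).trans (hM x₀ (mem_ball_self (by positivity)))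
  have hB := norm_conj_mul_deriv_div_sub_one_sub_le (hT.mono hsub) hT0 (L := 2 * ‖b‖)
    (fun w hw => by
      linarith [norm_le_norm_add_norm_sub' (deriv T w) b, hTb w (hsub hw), norm_nonneg b])
    (by linarith) (M := 9 * M) (fun w hw => (hT'' w (hsub hw)).trans
      (mul_le_of_le_one_right (by positivity) (pow_le_one₀ hδ.le hδ1))) hx hy hz
  have hg : ∀ w ∈ ball x₀ δ, w ≠ y → gfun T w y = (2 * (Real.pi : ℂ))⁻¹ *
      (F w - conj (T y) * deriv T w / (conj (T y) * T w - 1)) := by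
    intro w hw hwy
    rw [hFeq w (hsub hw) hwy, gfun]
    ring
  have hπ : ‖(2 * (Real.pi : ℂ))⁻¹‖ ≤ 1 := by
    rw [norm_inv, norm_mul, Complex.norm_real, Real.norm_of_nonneg Real.pi_pos.le,
      Complex.norm_two]
    exact inv_le_one_of_one_le₀ (by linarith [Real.pi_gt_three])
  rw [hg x hx hxy, hg z hz hzy, ← mul_sub, norm_mul, sub_sub_sub_comm]
  refine (mul_le_of_le_one_left (norm_nonneg _) hπ).trans ((norm_sub_le _ _).trans ?_)
  linarith

theorem stmt7_general
    (Ω : Set ℂ) (hΩo : IsOpen Ω)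
    (x₀ : ℂ) (hx₀ : x₀ ∈ Ω)
    (T : ℂ → ℂ) (hTd : DifferentiableOn ℂ T Ω)
    (hTbij : Set.BijOn T Ω (Metric.ball 0 1))
    (hT0 : T x₀ = 0)
    (hT2 : iteratedDeriv 2 T x₀ = 0)
    (hT3 : iteratedDeriv 3 T x₀ = 0) :
    ∃ δ₀ > (0:ℝ), ∃ K₁ > (0:ℝ), Metric.ball x₀ δ₀ ⊆ Ω ∧
      ∀ δ : ℝ, 0 < δ → δ ≤ δ₀ →
        ∀ x ∈ Metric.ball x₀ δ, ∀ y ∈ Metric.ball x₀ δ, ∀ z ∈ Metric.ball x₀ δ,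
          x ≠ y → z ≠ y →
          ‖gfun T x y - gfun T z y‖ ≤ K₁ * ‖x - z‖ * δ := by
  set b := deriv T x₀
  have hb : b ≠ 0 := deriv_ne_zero_of_injOn hΩo hTd hTbij.injOn hx₀
  have hA := hTd.analyticOnNhd hΩo
  obtain ⟨ρ, hρ, hρΩ⟩ := ((hA.deriv x₀ hx₀).continuousAt).exists_closedBall_subset_norm_sub_le
    (hΩo.mem_nhds hx₀) (half_pos (norm_pos_iff.mpr hb))
  have hcont : ContinuousOn (iteratedDeriv 4 T) (closedBall x₀ ρ) := by
    rw [iteratedDeriv_eq_iterate]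
    exact (hA.iterated_deriv 4).continuousOn.mono fun w hw => (hρΩ hw).1
  obtain ⟨M, hM⟩ := (isCompact_closedBall x₀ ρ).exists_bound_of_continuousOn hcont
  have hM0 : 0 ≤ M := (norm_nonneg _).trans (hM x₀ (mem_closedBall_self hρ.le))
  set δ₀ := min (ρ / 3) (min 1 (1 / (4 * ‖b‖)))
  have hδ₀ρ : 3 * δ₀ ≤ ρ := by linarith [min_le_left (ρ / 3) (min 1 (1 / (4 * ‖b‖)))]
  have hδ₀1 : δ₀ ≤ 1 := (min_le_right _ _).trans (min_le_left _ _)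
  have hδ₀b : 4 * ‖b‖ * δ₀ ≤ 1 :=
    (le_div_iff₀' (by positivity)).mp ((min_le_right _ _).trans (min_le_right _ _))
  have hδ₀ : 0 < δ₀ := by positivity
  have hball : ∀ {r}, r ≤ 3 * δ₀ → ball x₀ r ⊆ closedBall x₀ ρ := fun hr =>
    ball_subset_closedBall.trans (closedBall_subset_closedBall (by linarith))
  refine ⟨δ₀, hδ₀, 18 * M / ‖b‖ + 2 * ‖b‖ * (18 * M + 8 * ‖b‖ ^ 2), by positivity,
    fun w hw => (hρΩ (hball (by linarith) hw)).1,
    fun δ hδ hδδ₀ x hx y hy z hz hxy hzy => ?_⟩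
  have h3δ : ball x₀ (3 * δ) ⊆ closedBall x₀ ρ := hball (by linarith)
  exact norm_gfun_sub_gfun_le hδ (hδδ₀.trans hδ₀1) hb
    (hδ₀b.trans' (by gcongr)) (hTd.mono fun w hw => (hρΩ (h3δ hw)).1) hT0
    (fun w hw => (hρΩ (h3δ hw)).2) hT2 hT3 (fun w hw => hM w (h3δ hw)) hx hy hz hxy hzy

/-- if `T''(x₀) = 0` and `T'''(x₀) = 0` then, on small disks around `x₀`,
`|g(x,y) − g(z,y)| ≤ K₁·|x−z|·δ`. -/
theorem stmt7
    (Ω : Set ℂ) (hΩo : IsOpen Ω) (hΩb : Bornology.IsBounded Ω)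
    (hΩc : IsConnected Ω) (hΩsc : SimplyConnectedSpace Ω)
    (x₀ : ℂ) (hx₀ : x₀ ∈ Ω)
    (T : ℂ → ℂ) (hTd : DifferentiableOn ℂ T Ω)
    (hTbij : Set.BijOn T Ω (Metric.ball 0 1))
    (hT0 : T x₀ = 0)
    (hT2 : iteratedDeriv 2 T x₀ = 0)
    (hT3 : iteratedDeriv 3 T x₀ = 0) :
    ∃ δ₀ > (0:ℝ), ∃ K₁ > (0:ℝ), Metric.ball x₀ δ₀ ⊆ Ω ∧
      ∀ δ : ℝ, 0 < δ → δ ≤ δ₀ →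
        ∀ x ∈ Metric.ball x₀ δ, ∀ y ∈ Metric.ball x₀ δ, ∀ z ∈ Metric.ball x₀ δ,
          x ≠ y → z ≠ y →
          ‖gfun T x y - gfun T z y‖ ≤ K₁ * ‖x - z‖ * δ :=
  stmt7_general Ω hΩo x₀ hx₀ T hTd hTbij hT0 hT2 hT3
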